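/- Let r(t) be a solution of the Kepler equation r'' = -r/|r|³ lying on the curve a x + b y + c √(x²+y²) = 1 with c > 0. Then its energy E = |r'|²/2 − 1/|r| equals (a² + b² − c²)/(2c) and its angular momentum satisfies M² = 1/c. -/

import Mathlib

/-!
Differentiating the orbit equation `a x + b y + c r = 1` twice and inserting the radial equation
`r'' = M² / r³ - 1 / r²` gives `c M² = 1`. With `u = (a, b)`, the orbit equation and its first
derivative give `u · r = 1 - c r` and `u · v = -c r'`; the planar identity
`|(u · r) v - (u · v) r|² = |u|² M²`, together with `|v|² = r'² + M² / r²`, then yields the energy.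
-/

open Real

lemma HasDerivAt.eq_zero_of_forall_eq {f : ℝ → ℝ} {f' k t : ℝ} (hf : HasDerivAt f f' t)
    (hconst : ∀ s, f s = k) : f' = 0 := by
  rw [show f = fun _ => k from funext hconst] at hf
  exact hf.unique (hasDerivAt_const t k)

lemma sq_add_sq_pos_of_add_mul_sqrt_eq_one {a b c X Y : ℝ}
    (h : a * X + b * Y + c * √(X ^ 2 + Y ^ 2) = 1) : 0 < X ^ 2 + Y ^ 2 := by
  refine lt_of_le_of_ne (by positivity) fun hzero => ?_
  obtain ⟨hX, hY⟩ := (add_eq_zero_iff_of_nonneg (sq_nonneg X) (sq_nonneg Y)).mp hzero.symm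
  simp [pow_eq_zero_iff two_ne_zero |>.mp hX, pow_eq_zero_iff two_ne_zero |>.mp hY] at h

section Radial

variable {x y x' y' : ℝ → ℝ} {t u v u' v' : ℝ}

theorem hasDerivAt_sqrt_sq_add_sq (hx : HasDerivAt x u t) (hy : HasDerivAt y v t)
    (h : x t ^ 2 + y t ^ 2 ≠ 0) :
    HasDerivAt (fun s => √(x s ^ 2 + y s ^ 2)) ((x t * u + y t * v) / √(x t ^ 2 + y t ^ 2)) t := by
  convert ((hx.fun_pow 2).fun_add (hy.fun_pow 2)).sqrt h using 1
  field_simp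
  push_cast
  ring

/-- Radial acceleration: `r'' = M² / r³ + (r · acc) / r`. -/
theorem hasDerivAt_radialVelocity (hx : HasDerivAt x (x' t) t) (hy : HasDerivAt y (y' t) t)
    (hx' : HasDerivAt x' u' t) (hy' : HasDerivAt y' v' t) (h : 0 < x t ^ 2 + y t ^ 2) :
    HasDerivAt (fun s => (x s * x' s + y s * y' s) / √(x s ^ 2 + y s ^ 2))
      ((x t * y' t - y t * x' t) ^ 2 / √(x t ^ 2 + y t ^ 2) ^ 3
        + (x t * u' + y t * v') / √(x t ^ 2 + y t ^ 2)) t := by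
  have hr2 : √(x t ^ 2 + y t ^ 2) ^ 2 = x t ^ 2 + y t ^ 2 := sq_sqrt h.le
  have hr := (sqrt_pos.mpr h).ne'
  refine (((hx.fun_mul hx').fun_add (hy.fun_mul hy')).fun_div
    (hasDerivAt_sqrt_sq_add_sq hx hy h.ne') hr).congr_deriv ?_
  field_simp
  linear_combination (x' t ^ 2 + y' t ^ 2) * hr2

end Radial

section Algebra

variable {a b c X Y U V R : ℝ}

lemma mul_sq_angularMomentum_eq_one (hR : 0 < R) (hR2 : R ^ 2 = X ^ 2 + Y ^ 2)
    (h0 : a * X + b * Y + c * R = 1)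
    (h2 : a * (-X / R ^ 3) + b * (-Y / R ^ 3)
      + c * ((X * V - Y * U) ^ 2 / R ^ 3 + (X * (-X / R ^ 3) + Y * (-Y / R ^ 3)) / R) = 0) :
    c * (X * V - Y * U) ^ 2 = 1 := by
  field_simp at h2
  have hR_mul : R * (c * (X * V - Y * U) ^ 2 - 1) = 0 := by
    linear_combination h2 + R * h0 - c * hR2
  linear_combination (mul_eq_zero.mp hR_mul).resolve_left hR.ne'

lemma energy_eq_of_orbit (hc : 0 < c) (hR : 0 < R) (hR2 : R ^ 2 = X ^ 2 + Y ^ 2)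
    (h0 : a * X + b * Y + c * R = 1) (h1 : a * U + b * V + c * ((X * U + Y * V) / R) = 0)
    (hM : c * (X * V - Y * U) ^ 2 = 1) :
    (U ^ 2 + V ^ 2) / 2 - 1 / R = (a ^ 2 + b ^ 2 - c ^ 2) / (2 * c) := by
  set P := (X * U + Y * V) / R
  have hP : P * R = X * U + Y * V := div_mul_cancel₀ _ hR.ne'
  have hLagrange : (a ^ 2 + b ^ 2) * (X * V - Y * U) ^ 2
      = ((a * X + b * Y) * U - (a * U + b * V) * X) ^ 2
        + ((a * X + b * Y) * V - (a * U + b * V) * Y) ^ 2 := by ring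
  rw [show a * X + b * Y = 1 - c * R by linarith, show a * U + b * V = -(c * P) by linarith]
    at hLagrange
  have hB : (a ^ 2 + b ^ 2) * (X * V - Y * U) ^ 2
      = (1 - c * R) ^ 2 * (U ^ 2 + V ^ 2) + c * (2 - c * R) * P ^ 2 * R := by
    linear_combination hLagrange - 2 * c * P * (1 - c * R) * hP - c ^ 2 * P ^ 2 * hR2
  have hv : (X * V - Y * U) ^ 2 + (P * R) ^ 2 = R ^ 2 * (U ^ 2 + V ^ 2) := by
    linear_combination (X * U + Y * V + P * R) * hP - (U ^ 2 + V ^ 2) * hR2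
  field_simp
  linear_combination (-c * R) * hB - c ^ 2 * (2 - c * R) * hv
    + (R * (a ^ 2 + b ^ 2) + c * (2 - c * R)) * hM

end Algebra

theorem kepler_energy_angular_momentum_general
    (x y x' y' x'' y'' : ℝ → ℝ) (a b c : ℝ) (hc : 0 < c)
    (hx' : ∀ t, HasDerivAt x (x' t) t) (hy' : ∀ t, HasDerivAt y (y' t) t)
    (hx'' : ∀ t, HasDerivAt x' (x'' t) t) (hy'' : ∀ t, HasDerivAt y' (y'' t) t)
    (hODEx : ∀ t, x'' t = - x t / (x t ^ 2 + y t ^ 2) ^ ((3:ℝ)/2))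
    (hODEy : ∀ t, y'' t = - y t / (x t ^ 2 + y t ^ 2) ^ ((3:ℝ)/2))
    (horbit : ∀ t, a * x t + b * y t + c * Real.sqrt (x t ^ 2 + y t ^ 2) = 1) :
    (∀ t, (x' t ^ 2 + y' t ^ 2) / 2 - 1 / Real.sqrt (x t ^ 2 + y t ^ 2)
        = (a ^ 2 + b ^ 2 - c ^ 2) / (2 * c)) ∧
    (∀ t, (x t * y' t - y t * x' t) ^ 2 = 1 / c) := by
  have hs_pos t := sq_add_sq_pos_of_add_mul_sqrt_eq_one (horbit t)
  have hr_pos t := sqrt_pos.mpr (hs_pos t)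
  have hr_sq t := sq_sqrt (hs_pos t).le
  have hpow t : (x t ^ 2 + y t ^ 2) ^ ((3:ℝ)/2) = √(x t ^ 2 + y t ^ 2) ^ 3 := by
    rw [rpow_div_two_eq_sqrt 3 (by positivity), ← rpow_natCast]
    norm_num
  have hr' t := hasDerivAt_sqrt_sq_add_sq (hx' t) (hy' t) (hs_pos t).ne'
  have hr'' t := hasDerivAt_radialVelocity (hx' t) (hy' t) (hx'' t) (hy'' t) (hs_pos t)
  have h1 t : a * x' t + b * y' t
      + c * ((x t * x' t + y t * y' t) / √(x t ^ 2 + y t ^ 2)) = 0 :=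
    ((((hx' t).const_mul a).fun_add ((hy' t).const_mul b)).fun_add
      ((hr' t).const_mul c)).eq_zero_of_forall_eq horbit
  have h2 t := ((((hx'' t).const_mul a).fun_add ((hy'' t).const_mul b)).fun_add
      ((hr'' t).const_mul c)).eq_zero_of_forall_eq h1
  have hM t : c * (x t * y' t - y t * x' t) ^ 2 = 1 := by
    have := h2 t
    rw [hODEx, hODEy, hpow] at this
    exact mul_sq_angularMomentum_eq_one (hr_pos t) (hr_sq t) (horbit t) this
  refine ⟨fun t => energy_eq_of_orbit hc (hr_pos t) (hr_sq t) (horbit t) (h1 t) (hM t),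
    fun t => ?_⟩
  rw [eq_div_iff hc.ne', mul_comm]
  exact hM t

/-- A Kepler solution lying on the curve `a x + b y + c r = 1`
(c > 0) has energy `(a²+b²−c²)/(2c)` and angular momentum with `M² = 1/c`. -/
theorem kepler_energy_angular_momentum
    (x y x' y' x'' y'' : ℝ → ℝ) (a b c : ℝ) (hc : 0 < c)
    (hx' : ∀ t, HasDerivAt x (x' t) t) (hy' : ∀ t, HasDerivAt y (y' t) t)
    (hx'' : ∀ t, HasDerivAt x' (x'' t) t) (hy'' : ∀ t, HasDerivAt y' (y'' t) t)
    (hpos : ∀ t, x t ^ 2 + y t ^ 2 ≠ 0)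
    (hODEx : ∀ t, x'' t = - x t / (x t ^ 2 + y t ^ 2) ^ ((3:ℝ)/2))
    (hODEy : ∀ t, y'' t = - y t / (x t ^ 2 + y t ^ 2) ^ ((3:ℝ)/2))
    (horbit : ∀ t, a * x t + b * y t + c * Real.sqrt (x t ^ 2 + y t ^ 2) = 1) :
    (∀ t, (x' t ^ 2 + y' t ^ 2) / 2 - 1 / Real.sqrt (x t ^ 2 + y t ^ 2)
        = (a ^ 2 + b ^ 2 - c ^ 2) / (2 * c)) ∧
    (∀ t, (x t * y' t - y t * x' t) ^ 2 = 1 / c) :=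
  kepler_energy_angular_momentum_general x y x' y' x'' y'' a b c hc hx' hy' hx'' hy'' hODEx hODEy
    horbit
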